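/- Consider any broadcasted party-list election E = (N, C, k, l, A, L) with parties P_1, …, P_g whose popularities are strictly decreasing (n_1 > n_2 > … > n_g), in which every party has at least l candidates (|P_i| ≥ l for all i) and the parties jointly have at least k candidates (Σ_{i=1}^g |P_i| ≥ k). Let s be the least integer t with Σ_{i=1}^{t} |P_i| ≥ k. If min(⌈k/l⌉, g) > s, then IMP_CC(E) > 1, i.e., every winning committee of LV has strictly larger CC-score than every winning committee of AV. -/

import Mathlib

open Finset

/-- An election `E = (N, C, k, l, A, L)`: voters form the finite type `V`,
candidates the finite type `C`, `k` is the committee size, `l` the ballot limit,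
`A i` is the approval set of voter `i` and `L i` their ballot. -/
structure Election (V C : Type*) [Fintype V] [DecidableEq V] [Fintype C] [DecidableEq C] where
  k : ℕ
  l : ℕ
  A : V → Finset C
  L : V → Finset C
  k_le_card : k ≤ Fintype.card C
  one_le_l : 1 ≤ l
  l_le_k : l ≤ k
  ballot_card : ∀ i, (L i).card = l
  ballot_sub_approval : ∀ i, l ≤ (A i).card → L i ⊆ A i
  approval_ssub_ballot : ∀ i, (A i).card < l → A i ⊂ L i

variable {V C : Type*} [Fintype V] [DecidableEq V] [Fintype C] [DecidableEq C]

/-- The LV-score of a candidate: the number of voters whose ballot contains it. -/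
def sLVc (E : Election V C) (c : C) : ℕ := (univ.filter fun i => c ∈ E.L i).card

/-- The AV-score of a candidate: the number of voters approving it. -/
def sAVc (E : Election V C) (c : C) : ℕ := (univ.filter fun i => c ∈ E.A i).card

/-- The LV-score of a committee. -/
def sLV (E : Election V C) (W : Finset C) : ℕ := ∑ c ∈ W, sLVc E c

/-- The AV-score of a committee. -/
def sAV (E : Election V C) (W : Finset C) : ℕ := ∑ c ∈ W, sAVc E c

/-- The winning committees of Limited Voting: size-`k` committees maximizing the LV-score. -/
def LVwin (E : Election V C) : Set (Finset C) :=
  {W | W.card = E.k ∧ ∀ W' : Finset C, W'.card = E.k → sLV E W' ≤ sLV E W}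

/-- The winning committees of Approval Voting: size-`k` committees maximizing the AV-score. -/
def AVwin (E : Election V C) : Set (Finset C) :=
  {W | W.card = E.k ∧ ∀ W' : Finset C, W'.card = E.k → sAV E W' ≤ sAV E W}

/-- The Chamberlin–Courant score of a committee: the number of represented voters. -/
def sCC (E : Election V C) (W : Finset C) : ℕ :=
  (univ.filter fun i => (W ∩ E.A i).Nonempty).card

/-- `A` is a party-list profile: approval sets are nonempty and pairwise equal or disjoint. -/
def PartyList (E : Election V C) : Prop :=
  (∀ i, (E.A i).Nonempty) ∧ ∀ i j : V, E.A i = E.A j ∨ E.A i ∩ E.A j = ∅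

/-- `E` is consistent with some broadcasting (linear) order on candidates, encoded by an
injective priority function `f` (`f c < f c'` meaning `c ≻ c'`). -/
def Broadcasted (E : Election V C) : Prop :=
  ∃ f : C → ℕ, Function.Injective f ∧
    ∀ (i : V) (c c' : C), c ∈ E.A i → c' ∈ E.A i → c ∈ E.L i → c' ∉ E.L i → f c < f c'

/-- The number of voters of party `Pj`. -/
def nParty (E : Election V C) (Pj : Finset C) : ℕ := (univ.filter fun i => E.A i = Pj).card

/-!
Broadcasting forces all voters of a party `P j` to cast one common ballot `T j ⊆ P j`, so the
AV-score of a candidate is the size of its party and its LV-score the size of the party whose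
ballot contains it (`0` outside all parties, resp. ballots). Since the parties before `s` already
offer `k` candidates, each outscoring every other candidate, every AV winner lies inside them and
represents at most `n_0 + ⋯ + n_{s-1}` voters. An LV winner missing the ballot `T j` would consist
of candidates scoring at least `n_j`, i.e. of members of the `j` earlier ballots; as `j * l < k`
for `j ≤ s`, it meets every ballot `T 0, …, T s` and represents at least `n_0 + ⋯ + n_s` voters.
-/

open Function

section TopK

variable {α : Type*}

def IsTopK (f : α → ℕ) (k : ℕ) (W : Finset α) : Prop :=
  #W = k ∧ ∀ W' : Finset α, #W' = k → ∑ c ∈ W', f c ≤ ∑ c ∈ W, f c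

theorem exists_isTopK [Fintype α] (f : α → ℕ) {k : ℕ} (hk : k ≤ Fintype.card α) :
    ∃ W, IsTopK f k W := by
  have hne : (univ.powersetCard k : Finset (Finset α)).Nonempty :=
    powersetCard_nonempty.mpr (by rwa [card_univ])
  obtain ⟨W, hW, hmax⟩ := exists_max_image _ (fun W => ∑ c ∈ W, f c) hne
  exact ⟨W, mem_powersetCard_univ.mp hW,
    fun W' hW' => hmax W' (mem_powersetCard_univ.mpr hW')⟩

variable [DecidableEq α] {f : α → ℕ} {k : ℕ} {W : Finset α}

theorem IsTopK.le_of_mem_of_notMem (hW : IsTopK f k W) {c c' : α} (hc : c ∈ W) (hc' : c' ∉ W) :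
    f c' ≤ f c := by
  have hc'' : c' ∉ W.erase c := fun h => hc' (mem_of_mem_erase h)
  have hcard : #(insert c' (W.erase c)) = k := by
    rw [card_insert_of_notMem hc'', card_erase_of_mem hc, ← hW.1]
    exact Nat.sub_add_cancel (card_pos.mpr ⟨c, hc⟩)
  have hle := hW.2 _ hcard
  rw [sum_insert hc'', ← add_sum_erase W f hc] at hle
  omega

theorem IsTopK.subset_of_forall_lt (hW : IsTopK f k W) {U : Finset α} (hU : k ≤ #U)
    (hlt : ∀ c ∈ U, ∀ c' ∉ U, f c' < f c) : W ⊆ U := by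
  intro c hcW
  by_contra hcU
  obtain ⟨c', hc'⟩ : (U \ W).Nonempty := by
    rw [sdiff_nonempty]
    intro hUW
    have := card_lt_card ((ssubset_iff_of_subset hUW).mpr ⟨c, hcW, hcU⟩)
    have := hW.1
    omega
  rw [mem_sdiff] at hc'
  exact (hW.le_of_mem_of_notMem hcW hc'.2).not_gt (hlt c' hc'.1 c hcU)

theorem IsTopK.inter_nonempty [Fintype α] (hW : IsTopK f k W) {T : Finset α} {v : ℕ}
    (hT : T.Nonempty) (hv : ∀ c ∈ T, f c = v)
    (hcard : #(({c | v ≤ f c} : Finset α) \ T) < k) :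
    (W ∩ T).Nonempty := by
  by_contra hWT
  rw [not_nonempty_iff_eq_empty, ← disjoint_iff_inter_eq_empty] at hWT
  obtain ⟨c', hc'⟩ := hT
  have hsub : W ⊆ ({c | v ≤ f c} : Finset α) \ T := fun c hc =>
    mem_sdiff.mpr ⟨mem_filter.mpr ⟨mem_univ c,
      hv c' hc' ▸ hW.le_of_mem_of_notMem hc (disjoint_right.mp hWT hc')⟩,
      disjoint_left.mp hWT hc⟩
  have := card_le_card hsub
  have := hW.1
  omega

end TopK

theorem one_lt_sInf_div_sSup {S T : Set ℕ} (hS : S.Nonempty) (hT : T.Nonempty)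
    (hTbdd : BddAbove T) (hTpos : ∀ b ∈ T, 0 < b) (hlt : ∀ a ∈ S, ∀ b ∈ T, b < a) :
    (1 : ℚ) < ((sInf S : ℕ) : ℚ) / ((sSup T : ℕ) : ℚ) := by
  have ha := Nat.sInf_mem hS
  have hb := Nat.sSup_mem hT hTbdd
  rw [one_lt_div (by exact_mod_cast hTpos _ hb)]
  exact_mod_cast hlt _ ha _ hb

section Election

variable {E : Election V C}

theorem mem_LVwin_iff {W : Finset C} : W ∈ LVwin E ↔ IsTopK (sLVc E) E.k W := Iff.rfl

theorem mem_AVwin_iff {W : Finset C} : W ∈ AVwin E ↔ IsTopK (sAVc E) E.k W := Iff.rfl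

theorem LVwin_nonempty (E : Election V C) : (LVwin E).Nonempty :=
  exists_isTopK _ E.k_le_card

theorem AVwin_nonempty (E : Election V C) : (AVwin E).Nonempty :=
  exists_isTopK _ E.k_le_card

theorem sCC_pos_of_mem {W : Finset C} {c : C} {i : V} (hcW : c ∈ W) (hci : c ∈ E.A i) :
    0 < sCC E W :=
  card_pos.mpr ⟨i, mem_filter.mpr ⟨mem_univ i, c, mem_inter.mpr ⟨hcW, hci⟩⟩⟩

theorem nParty_pos {Q : Finset C} (hQ : ∃ i, E.A i = Q) : 0 < nParty E Q := by
  obtain ⟨i, hi⟩ := hQ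
  exact card_pos.mpr ⟨i, mem_filter.mpr ⟨mem_univ i, hi⟩⟩

/-- The ballot of a voter is the `l` best of their approved candidates in the broadcasting
order, so it is determined by the approval set. -/
theorem Broadcasted.ballot_eq_of_approval_eq (hB : Broadcasted E) {i i' : V}
    (hl : E.l ≤ #(E.A i)) (hA : E.A i = E.A i') : E.L i = E.L i' := by
  obtain ⟨f, -, hf⟩ := hB
  have hLA : E.L i ⊆ E.A i := E.ballot_sub_approval i hl
  have hLA' : E.L i' ⊆ E.A i := hA ▸ E.ballot_sub_approval i' (hA ▸ hl)
  have hcard : #(E.L i) = #(E.L i') := by rw [E.ballot_card, E.ballot_card]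
  by_contra hne
  obtain ⟨c, hc, hc'⟩ := not_subset.mp fun h => hne (eq_of_subset_of_card_le h hcard.ge)
  obtain ⟨d, hd, hd'⟩ := not_subset.mp fun h => hne (eq_of_subset_of_card_le h hcard.le).symm
  have hcd := hf i c d (hLA hc) (hLA' hd) hc hd'
  have hdc := hf i' d c (hA ▸ hLA' hd) (hA ▸ hLA hc) hd hc'
  omega

variable {g : ℕ} {P : Fin g → Finset C}

theorem PartyList.pairwise_disjoint (hPL : PartyList E) (hPrep : ∀ j, ∃ i : V, E.A i = P j)
    (hP : Injective P) : Pairwise (Disjoint on P) := by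
  intro j j' hne
  obtain ⟨i, hi⟩ := hPrep j
  obtain ⟨i', hi'⟩ := hPrep j'
  rcases hPL.2 i i' with h | h
  · exact absurd (hP (hi ▸ hi' ▸ h)) hne
  · exact disjoint_iff_inter_eq_empty.mpr (hi ▸ hi' ▸ h)

theorem Broadcasted.exists_party_ballot (hB : Broadcasted E) (hPall : ∀ i : V, ∃ j, E.A i = P j)
    (hPrep : ∀ j, ∃ i : V, E.A i = P j) (hPl : ∀ j, E.l ≤ #(P j)) :
    ∃ T : Fin g → Finset C,
      (∀ i j, E.A i = P j → E.L i = T j) ∧ ∀ j, T j ⊆ P j ∧ #(T j) = E.l := by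
  choose rep hrep using hPrep
  have hl : ∀ i, E.l ≤ #(E.A i) := fun i => (hPall i).elim fun j hj => hj ▸ hPl j
  refine ⟨fun j => E.L (rep j), fun i j hij => hB.ballot_eq_of_approval_eq (hl i) ?_,
    fun j => ⟨hrep j ▸ E.ballot_sub_approval _ (hl _), E.ballot_card _⟩⟩
  rw [hij, hrep]

theorem card_filter_mem_eq_nParty (hPall : ∀ i : V, ∃ j, E.A i = P j) (hP : Injective P)
    {X : V → Finset C} {T : Fin g → Finset C} (hX : ∀ i j, E.A i = P j → X i = T j)
    (hT : Pairwise (Disjoint on T)) {c : C} {j : Fin g} (hc : c ∈ T j) :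
    #{i | c ∈ X i} = nParty E (P j) := by
  unfold nParty
  congr 1
  ext i
  obtain ⟨j', hj'⟩ := hPall i
  simp only [mem_filter, mem_univ, true_and, hX i j' hj', hj', hP.eq_iff]
  refine ⟨fun h => ?_, fun h => h ▸ hc⟩
  by_contra hne
  exact disjoint_left.mp (hT hne) h hc

theorem card_filter_mem_eq_zero (hPall : ∀ i : V, ∃ j, E.A i = P j) {X : V → Finset C}
    {T : Fin g → Finset C} (hX : ∀ i j, E.A i = P j → X i = T j) {c : C}
    (hc : ∀ j, c ∉ T j) :
    #{i | c ∈ X i} = 0 := by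
  rw [card_eq_zero, filter_eq_empty_iff]
  intro i _
  obtain ⟨j, hj⟩ := hPall i
  rw [hX i j hj]
  exact hc j

theorem sCC_eq_sum_nParty (hPall : ∀ i : V, ∃ j, E.A i = P j) (hP : Injective P)
    (W : Finset C) : sCC E W = ∑ j with (W ∩ P j).Nonempty, nParty E (P j) := by
  unfold sCC nParty
  rw [← card_biUnion fun j _ j' _ hne =>
    disjoint_filter.mpr fun i _ (hi : E.A i = P j) hi' => hne (hP (hi.symm.trans hi'))]
  congr 1
  ext i
  obtain ⟨j, hj⟩ := hPall i
  simp only [mem_filter, mem_univ, true_and, mem_biUnion]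
  exact ⟨fun h => ⟨j, hj ▸ h, hj⟩, fun ⟨j', hj', hij'⟩ => hij' ▸ hj'⟩

theorem AVwin_subset_biUnion (hPall : ∀ i : V, ∃ j, E.A i = P j)
    (hPrep : ∀ j, ∃ i : V, E.A i = P j) (hP : Injective P) (hdisj : Pairwise (Disjoint on P))
    (hanti : StrictAnti fun j => nParty E (P j)) {s : ℕ}
    (hs : E.k ≤ ∑ j ∈ univ.filter (fun j : Fin g => (j : ℕ) < s), #(P j))
    {W : Finset C} (hW : W ∈ AVwin E) :
    W ⊆ (univ.filter fun j : Fin g => (j : ℕ) < s).biUnion P := by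
  have hscore : ∀ {c j}, c ∈ P j → sAVc E c = nParty E (P j) :=
    card_filter_mem_eq_nParty hPall hP (fun _ _ h => h) hdisj
  refine (mem_AVwin_iff.mp hW).subset_of_forall_lt ?_ ?_
  · rwa [card_biUnion fun j _ j' _ hne => hdisj hne]
  intro c hc c' hc'
  obtain ⟨j, hj, hcj⟩ := mem_biUnion.mp hc
  rw [hscore hcj]
  by_cases h : ∃ j', c' ∈ P j'
  · obtain ⟨j', hc'j'⟩ := h
    have hj' : ¬ (j' : ℕ) < s := fun h => hc' (mem_biUnion.mpr ⟨j', by simpa using h, hc'j'⟩)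
    rw [hscore hc'j']
    exact hanti (Fin.lt_def.mpr (by simp only [mem_filter] at hj; omega))
  · have h0 : sAVc E c' = 0 := card_filter_mem_eq_zero hPall (fun _ _ h => h) (not_exists.mp h)
    exact h0 ▸ nParty_pos (hPrep j)

theorem LVwin_inter_nonempty (hPall : ∀ i : V, ∃ j, E.A i = P j)
    (hPrep : ∀ j, ∃ i : V, E.A i = P j) (hP : Injective P)
    (hanti : StrictAnti fun j => nParty E (P j)) {T : Fin g → Finset C}
    (hLT : ∀ i j, E.A i = P j → E.L i = T j) (hT : Pairwise (Disjoint on T))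
    (hTcard : ∀ j, #(T j) = E.l) {W : Finset C} (hW : W ∈ LVwin E) {j : Fin g}
    (hj : E.l * j < E.k) : (W ∩ T j).Nonempty := by
  have hscore : ∀ {c j}, c ∈ T j → sLVc E c = nParty E (P j) :=
    card_filter_mem_eq_nParty hPall hP hLT hT
  refine (mem_LVwin_iff.mp hW).inter_nonempty (v := nParty E (P j))
    (card_pos.mp (hTcard j ▸ E.one_le_l)) (fun c hc => hscore hc) ?_
  have hsub : ({c | nParty E (P j) ≤ sLVc E c} : Finset C) \ T j ⊆ (Iio j).biUnion T := by
    intro c hc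
    rw [mem_sdiff, mem_filter] at hc
    obtain ⟨j', hj'⟩ : ∃ j', c ∈ T j' := by
      by_contra h
      have h0 := card_filter_mem_eq_zero hPall hLT (not_exists.mp h)
      have := nParty_pos (hPrep j)
      simp only [sLVc] at hc
      omega
    have hle : j' ≤ j := hanti.le_iff_ge.mp (hscore hj' ▸ hc.1.2)
    exact mem_biUnion.mpr ⟨j', mem_Iio.mpr (lt_of_le_of_ne hle fun h => hc.2 (h ▸ hj')), hj'⟩
  calc #(({c | nParty E (P j) ≤ sLVc E c} : Finset C) \ T j)
      ≤ #((Iio j).biUnion T) := card_le_card hsub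
    _ ≤ ∑ j' ∈ Iio j, #(T j') := card_biUnion_le
    _ = E.l * j := by simp [hTcard, Fin.card_Iio, mul_comm]
    _ < E.k := hj

theorem sCC_lt_sCC_of_subset_biUnion (hPall : ∀ i : V, ∃ j, E.A i = P j)
    (hPrep : ∀ j, ∃ i : V, E.A i = P j) (hP : Injective P) (hdisj : Pairwise (Disjoint on P))
    {s : ℕ} (hsg : s < g) {W W' : Finset C}
    (hW' : W' ⊆ (univ.filter fun j : Fin g => (j : ℕ) < s).biUnion P)
    (hW : ∀ j : Fin g, (j : ℕ) ≤ s → (W ∩ P j).Nonempty) : sCC E W' < sCC E W := by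
  have hW'lt : ∀ j : Fin g, (W' ∩ P j).Nonempty → (j : ℕ) < s := by
    rintro j ⟨c, hc⟩
    obtain ⟨j', hj', hcj'⟩ := mem_biUnion.mp (hW' (mem_inter.mp hc).1)
    obtain rfl : j = j' :=
      by_contra fun hne => disjoint_left.mp (hdisj hne) (mem_inter.mp hc).2 hcj'
    exact (mem_filter.mp hj').2
  rw [sCC_eq_sum_nParty hPall hP, sCC_eq_sum_nParty hPall hP]
  refine sum_lt_sum_of_subset (i := ⟨s, hsg⟩) ?_ ?_ ?_ (nParty_pos (hPrep _))
    fun _ _ _ => Nat.zero_le _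
  · intro j hj
    simp only [mem_filter, mem_univ, true_and] at hj ⊢
    exact hW j (hW'lt j hj).le
  · simpa using hW ⟨s, hsg⟩ le_rfl
  · simpa using fun h => (hW'lt ⟨s, hsg⟩ h).ne rfl

end Election

theorem stmt3_general (E : Election V C) (hPL : PartyList E) (hB : Broadcasted E)
    (g : ℕ) (P : Fin g → Finset C)
    (hPall : ∀ i : V, ∃ j, E.A i = P j)
    (hPrep : ∀ j, ∃ i : V, E.A i = P j)
    (hanti : ∀ j j' : Fin g, j < j' → nParty E (P j') < nParty E (P j))
    (hPl : ∀ j, E.l ≤ (P j).card)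
    (s : ℕ)
    (hs : E.k ≤ ∑ j ∈ univ.filter (fun j : Fin g => (j : ℕ) < s), (P j).card)
    (hgt : s < min ((E.k + E.l - 1) / E.l) g) :
    (1 : ℚ) < ((sInf (sCC E '' LVwin E) : ℕ) : ℚ) / ((sSup (sCC E '' AVwin E) : ℕ) : ℚ) ∧
      ∀ W ∈ LVwin E, ∀ W' ∈ AVwin E, sCC E W' < sCC E W := by
  have hP : Injective P := Injective.of_comp (f := nParty E) (StrictAnti.injective hanti)
  have hdisj := hPL.pairwise_disjoint hPrep hP
  obtain ⟨T, hLT, hTP⟩ := hB.exists_party_ballot hPall hPrep hPl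
  have hTdisj : Pairwise (Disjoint on T) := fun j j' hne => (hdisj hne).mono (hTP j).1 (hTP j').1
  obtain ⟨hsk, hsg⟩ := lt_min_iff.mp hgt
  rw [← Nat.ceilDiv_eq_add_pred_div] at hsk
  have hsl : E.l * s < E.k :=
    not_le.mp fun h => hsk.not_ge ((ceilDiv_le_iff_le_mul E.one_le_l).mpr h)
  have hAV : ∀ W' ∈ AVwin E, W' ⊆ (univ.filter fun j : Fin g => (j : ℕ) < s).biUnion P :=
    fun W' => AVwin_subset_biUnion hPall hPrep hP hdisj hanti hs
  have hLV : ∀ W ∈ LVwin E, ∀ j : Fin g, (j : ℕ) ≤ s → (W ∩ P j).Nonempty :=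
    fun W hW j hj =>
      (LVwin_inter_nonempty hPall hPrep hP hanti hLT hTdisj (fun j => (hTP j).2) hW
        ((Nat.mul_le_mul_left _ hj).trans_lt hsl)).mono (inter_subset_inter_left (hTP j).1)
  have hlt : ∀ W ∈ LVwin E, ∀ W' ∈ AVwin E, sCC E W' < sCC E W := fun W hW W' hW' =>
    sCC_lt_sCC_of_subset_biUnion hPall hPrep hP hdisj hsg (hAV W' hW') (hLV W hW)
  refine ⟨one_lt_sInf_div_sSup ((LVwin_nonempty E).image _) ((AVwin_nonempty E).image _)
    ((Set.toFinite _).image _).bddAbove ?_ ?_, hlt⟩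
  · rintro _ ⟨W', hW', rfl⟩
    obtain ⟨c, hc⟩ := card_pos.mp (hW'.1 ▸ E.one_le_l.trans E.l_le_k)
    obtain ⟨j, -, hcj⟩ := mem_biUnion.mp (hAV W' hW' hc)
    obtain ⟨i, hi⟩ := hPrep j
    exact sCC_pos_of_mem hc (hi ▸ hcj)
  · rintro _ ⟨W, hW, rfl⟩ _ ⟨W', hW', rfl⟩
    exact hlt W hW W' hW'

/-- In a broadcasted party-list election as in Statement 2, if
`min(⌈k/l⌉, g) > s` then `IMP_CC(E) > 1`, i.e. every LV-winning committee has strictly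
larger CC-score than every AV-winning committee. -/
theorem stmt3 (E : Election V C) (hPL : PartyList E) (hB : Broadcasted E)
    (g : ℕ) (P : Fin g → Finset C)
    (hPall : ∀ i : V, ∃ j, E.A i = P j)
    (hPrep : ∀ j, ∃ i : V, E.A i = P j)
    (hanti : ∀ j j' : Fin g, j < j' → nParty E (P j') < nParty E (P j))
    (hPl : ∀ j, E.l ≤ (P j).card)
    (hPk : E.k ≤ ∑ j : Fin g, (P j).card)
    (s : ℕ)
    (hs : E.k ≤ ∑ j ∈ univ.filter (fun j : Fin g => (j : ℕ) < s), (P j).card)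
    (hsleast : ∀ t : ℕ,
      E.k ≤ ∑ j ∈ univ.filter (fun j : Fin g => (j : ℕ) < t), (P j).card → s ≤ t)
    (hgt : s < min ((E.k + E.l - 1) / E.l) g) :
    (1 : ℚ) < ((sInf (sCC E '' LVwin E) : ℕ) : ℚ) / ((sSup (sCC E '' AVwin E) : ℕ) : ℚ) ∧
      ∀ W ∈ LVwin E, ∀ W' ∈ AVwin E, sCC E W' < sCC E W :=
  stmt3_general E hPL hB g P hPall hPrep hanti hPl s hs hgt
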